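/- For every ν < ω₁ with ν ∉ S there exists a group homomorphism π_ν : G_η̄ → G_η̄^ν such that π_ν(g) = g for every g ∈ G_η̄^ν; consequently G_η̄^ν is a direct summand of G_η̄. -/

import Mathlib

set_option autoImplicit false
noncomputable section

open Ordinal Cardinal

/-- A ladder on a limit ordinal `δ`: a strictly increasing cofinal sequence of
successor ordinals below `δ`. -/
structure IsLadder (δ : Ordinal) (η : ℕ → Ordinal) : Prop where
  strictMono : StrictMono η
  isSucc : ∀ n : ℕ, ∃ α : Ordinal, η n = α + 1
  lt_delta : ∀ n : ℕ, η n < δ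
  cofinal : ∀ β < δ, ∃ n : ℕ, β < η n

/-- Conditions (a) and (b) for `k` to witness that the ladder `η` is special. -/
def SpecialCond (η : ℕ → Ordinal) (k : ℕ → ℕ) : Prop :=
  ∀ n : ℕ,
    (∀ i < k (n + 1) - k n, ∀ j < k (n + 1) - k n,
      η (k n + i) + Ordinal.omega0 = η (k n + j) + Ordinal.omega0) ∧
    η (k n) + Ordinal.omega0 < η (k (n + 1))

/-- A club (closed unbounded) subset of `ω₁`. -/
def IsClubBelowOmega1 (C : Set Ordinal) : Prop :=
  (∀ γ ∈ C, γ < ω₁) ∧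
  (∀ α < ω₁, ∃ γ ∈ C, α < γ) ∧
  (∀ δ, δ < ω₁ → δ ≠ 0 → (∀ β < δ, ∃ γ ∈ C, β < γ ∧ γ < δ) → δ ∈ C)

/-- A stationary subset of `ω₁`: one meeting every club. -/
def IsStationaryBelowOmega1 (T : Set Ordinal) : Prop :=
  ∀ C : Set Ordinal, IsClubBelowOmega1 C → (T ∩ C).Nonempty

/-- The standing hypotheses on the set `S`: a stationary, co-stationary subset of `ω₁`
consisting of limit ordinals of cofinality `ω` divisible by `ω²`. -/
structure GoodS (S : Set Ordinal) : Prop where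
  stationary : IsStationaryBelowOmega1 S
  costationary : IsStationaryBelowOmega1 ({α : Ordinal | α < ω₁} \ S)
  lt_omega1 : ∀ δ ∈ S, δ < ω₁
  isLimit : ∀ δ ∈ S, Order.IsSuccLimit δ
  cof_eq : ∀ δ ∈ S, Ordinal.cof δ = Cardinal.aleph0
  omega_sq_dvd : ∀ δ ∈ S, Ordinal.omega0 ^ 2 ∣ δ

/-- A special ladder system on `S`: for each `δ ∈ S` a special ladder `eta δ`
with witnessing sequence `kk δ`. -/
structure LadderSystem (S : Set Ordinal) where
  eta : Ordinal → ℕ → Ordinal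
  kk : Ordinal → ℕ → ℕ
  ladder : ∀ δ ∈ S, IsLadder δ (eta δ)
  kk_pos : ∀ δ ∈ S, 0 < kk δ 0
  kk_mono : ∀ δ ∈ S, StrictMono (kk δ)
  special : ∀ δ ∈ S, SpecialCond (eta δ) (kk δ)

/-- Equality of the ω-ranges of two special ladder systems: `rd(η̄) = rd(ν̄)`. -/
def rdEq (S : Set Ordinal) (L M : LadderSystem S) : Prop :=
  ∀ δ ∈ S, ∀ n : ℕ,
    L.eta δ (L.kk δ n) + Ordinal.omega0 = M.eta δ (M.kk δ n) + Ordinal.omega0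

/-- Index type for the basis of the ambient `ℚ`-vector space `F`. -/
abbrev FIdx : Type 1 := Ordinal ⊕ (Ordinal × ℕ)

/-- The ambient `ℚ`-vector space `F`, with basis `x_β` (β an ordinal) and `y_{δ,n}`. -/
abbrev Fsp : Type 1 := FIdx →₀ ℚ

/-- The basis vector `x_β`. -/
def xgen (β : Ordinal) : Fsp := Finsupp.single (Sum.inl β) 1

/-- The basis vector `y_{δ,n}`. -/
def ygen (δ : Ordinal) (n : ℕ) : Fsp := Finsupp.single (Sum.inr (δ, n)) 1

/-- The elements `z_{δ,n}`, defined by `z_{δ,0} = y_δ` and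
`z_{δ,n+1} = ψ(n)⁻¹ (z_{δ,n} + Σ_{l<tₙ^δ} a_l^{δ,n} x_{η_δ(kₙ^δ+l)})`, equivalently
`ψ(n) z_{δ,n+1} = z_{δ,n} + Σ_{l<tₙ^δ} a_l^{δ,n} x_{η_δ(kₙ^δ+l)}`. -/
def zgen (eta : Ordinal → ℕ → Ordinal) (kk : Ordinal → ℕ → ℕ)
    (a : Ordinal → ℕ → ℕ → ℤ) (ψ : ℕ → ℕ) (δ : Ordinal) : ℕ → Fsp
  | 0 => ygen δ 0
  | n + 1 => ((ψ n : ℚ))⁻¹ •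
      (zgen eta kk a ψ δ n +
        ∑ l ∈ Finset.range (kk δ (n + 1) - kk δ n), a δ n l • xgen (eta δ (kk δ n + l)))

/-- All the data needed to build the group `G_η̄`: a special ladder system together with
the function `ψ` (everywhere nonzero) and the coefficients `a_l^{δ,n}` with
`gcd(a_l^{δ,n} : l < tₙ^δ) = 1`. -/
structure GroupData (S : Set Ordinal) extends LadderSystem S where
  a : Ordinal → ℕ → ℕ → ℤ
  psi : ℕ → ℕ
  psi_ne : ∀ n : ℕ, psi n ≠ 0
  a_gcd : ∀ δ ∈ S, ∀ n : ℕ, (Finset.range (kk δ (n + 1) - kk δ n)).gcd (a δ n) = 1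

/-- The group `G_η̄ ≤ (F,+)`, generated by the `x_β` (β < ω₁) and the `z_{δ,n}` (δ ∈ S). -/
def Ggrp (S : Set Ordinal) (D : GroupData S) : AddSubgroup Fsp :=
  AddSubgroup.closure
    ({f : Fsp | ∃ β < ω₁, f = xgen β} ∪
     {f : Fsp | ∃ δ ∈ S, ∃ n : ℕ, f = zgen D.eta D.kk D.a D.psi δ n})

/-- The `ℚ`-subspace `V_α` spanned by the `x_β` (β < α+ω) and `y_{δ,n}` (δ ∈ S ∩ α). -/
def Vsp (S : Set Ordinal) (α : Ordinal) : Submodule ℚ Fsp :=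
  Submodule.span ℚ
    ({f : Fsp | ∃ β < α + Ordinal.omega0, f = xgen β} ∪
     {f : Fsp | ∃ δ ∈ S, δ < α ∧ ∃ n : ℕ, f = ygen δ n})

/-- The pure closure of `H` in `G`: `{g ∈ G : m • g ∈ H for some nonzero integer m}`. -/
def purify (G H : AddSubgroup Fsp) : AddSubgroup Fsp where
  carrier := {g : Fsp | g ∈ G ∧ ∃ m : ℤ, m ≠ 0 ∧ m • g ∈ H}
  zero_mem' := ⟨G.zero_mem, 1, one_ne_zero, by simpa using H.zero_mem⟩
  add_mem' := by
    rintro g₁ g₂ ⟨hg₁, m₁, hm₁, h₁⟩ ⟨hg₂, m₂, hm₂, h₂⟩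
    refine ⟨G.add_mem hg₁ hg₂, m₁ * m₂, mul_ne_zero hm₁ hm₂, ?_⟩
    rw [smul_add]
    exact H.add_mem (by rw [mul_comm, mul_smul]; exact H.zsmul_mem h₁ _)
      (by rw [mul_smul]; exact H.zsmul_mem h₂ _)
  neg_mem' := by
    rintro g ⟨hg, m, hm, h⟩
    exact ⟨G.neg_mem hg, m, hm, by simpa using H.neg_mem h⟩

/-- The canonical filtration `G_η̄^α`: the pure closure in `G_η̄` of `G_η̄ ∩ V_α`. -/
def Gfil (S : Set Ordinal) (D : GroupData S) (α : Ordinal) : AddSubgroup Fsp :=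
  purify (Ggrp S D) ((Vsp S α).toAddSubgroup ⊓ Ggrp S D)

/-- `H` is a direct summand of `G` (both viewed as subgroups of the ambient group). -/
def IsDirectSummandIn (H G : AddSubgroup Fsp) : Prop :=
  H ≤ G ∧ ∃ K : AddSubgroup Fsp, K ≤ G ∧ H ⊓ K = ⊥ ∧ H ⊔ K = G

/-!
Define a `ℚ`-linear projection `P` of `F` onto `V_ν`: it keeps `x_β` for `β < ν + ω` and
`y_{δ,n}` for `δ ∈ S ∩ ν`, kills the remaining basis vectors, except that for `δ ∈ S` above `ν`
it sends `y_δ` to the part of its expansion in the `w_{δ,i} = Σ_l a_l^{δ,i} x_{η_δ(k_i+l)}`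
lying below `ν + ω`. Since `ω² ∣ δ`, we have `ν + ω < δ`, and by specialness each block of the
ladder lies entirely below or entirely above `ν + ω`; so `P z_{δ,n}` is an integral combination
of the `w_{δ,i}`. As `ν ∉ S`, every generator of `G` is covered, hence `P` maps `G` into
`G ∩ V_ν`, which is `G^ν` because `V_ν` is a `ℚ`-subspace. Thus `P` restricts to a retraction of
`G` onto `G^ν`, and its kernel is a complement.
-/

namespace Ordinal

theorem lt_add_omega0_iff {β ν : Ordinal} : β < ν + ω ↔ β + ω ≤ ν + ω := by
  refine ⟨fun h => ?_, fun h => (lt_add_of_pos_right β omega0_pos).trans_le h⟩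
  obtain ⟨d, hd, hβ⟩ := (lt_add_iff omega0_ne_zero).1 h
  calc β + ω ≤ ν + d + ω := add_le_add_left hβ ω
    _ = ν + ω := by rw [add_assoc, add_omega0 hd]

theorem add_omega0_lt_of_omega0_sq_dvd {ν δ : Ordinal} (hδ : ω ^ 2 ∣ δ) (hν : ν < δ) :
    ν + ω < δ := by
  obtain ⟨γ, rfl⟩ := hδ
  have hγ : 0 < γ := pos_iff_ne_zero.2 (by rintro rfl; simp at hν)
  have hlim : Order.IsSuccLimit (ω * γ) := isSuccLimit_mul_left isSuccLimit_omega0 hγ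
  rw [sq, mul_assoc] at hν ⊢
  obtain ⟨c, hc, hνc⟩ := (lt_mul_iff_of_isSuccLimit hlim).1 hν
  calc ν + ω ≤ ω * c + ω := add_le_add_left hνc.le ω
    _ = ω * (c + 1) := (mul_add_one ω c).symm
    _ < ω * (ω * γ) := mul_lt_mul_of_pos_left (hlim.add_one_lt hc) omega0_pos

end Ordinal

theorem mem_purify_inf_iff {G : AddSubgroup Fsp} {V : Submodule ℚ Fsp} {g : Fsp} :
    g ∈ purify G (V.toAddSubgroup ⊓ G) ↔ g ∈ G ∧ g ∈ V := by
  refine ⟨fun ⟨hg, m, hm, hmg⟩ => ⟨hg, ?_⟩, fun ⟨hg, hgV⟩ => ⟨hg, 1, one_ne_zero, ?_⟩⟩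
  · have hmV : (m : ℚ) • g ∈ V := by
      rw [Int.cast_smul_eq_zsmul]
      exact (AddSubgroup.mem_inf.1 hmg).1
    exact (Submodule.smul_mem_iff V (Int.cast_ne_zero.2 hm)).1 hmV
  · rw [one_zsmul]
    exact ⟨hgV, hg⟩

theorem mem_Gfil_iff {S : Set Ordinal} {D : GroupData S} {α : Ordinal} {g : Fsp} :
    g ∈ Gfil S D α ↔ g ∈ Ggrp S D ∧ g ∈ Vsp S α :=
  mem_purify_inf_iff

theorem isDirectSummandIn_of_retraction {H G : AddSubgroup Fsp} (p : Fsp →+ Fsp) (hHG : H ≤ G)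
    (hmaps : ∀ g ∈ G, p g ∈ H) (hfix : ∀ h ∈ H, p h = h) : IsDirectSummandIn H G := by
  refine ⟨hHG, G ⊓ p.ker, inf_le_left, ?_, ?_⟩
  · refine eq_bot_iff.2 fun g hg => ?_
    obtain ⟨hgH, -, hgK⟩ := hg
    rw [AddSubgroup.mem_bot, ← hfix g hgH]
    exact hgK
  · refine le_antisymm (sup_le hHG inf_le_left) fun g hg => ?_
    have hker : g - p g ∈ G ⊓ p.ker :=
      AddSubgroup.mem_inf.2 ⟨sub_mem hg (hHG (hmaps g hg)), by simp [hfix _ (hmaps g hg)]⟩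
    simpa using add_mem (AddSubgroup.mem_sup_left (hmaps g hg)) (AddSubgroup.mem_sup_right hker)

namespace GroupData

variable {S : Set Ordinal} (D : GroupData S)

def blockSum (δ : Ordinal) (i : ℕ) : Fsp :=
  ∑ l ∈ Finset.range (D.kk δ (i + 1) - D.kk δ i), D.a δ i l • xgen (D.eta δ (D.kk δ i + l))

def psiProd (n : ℕ) : ℕ := ∏ i ∈ Finset.range n, D.psi i

theorem cast_psiProd_ne_zero (n : ℕ) : (D.psiProd n : ℚ) ≠ 0 :=
  Nat.cast_ne_zero.2 (Finset.prod_ne_zero_iff.2 fun i _ => D.psi_ne i)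

theorem psi_smul_zgen_succ (δ : Ordinal) (n : ℕ) :
    (D.psi n : ℚ) • zgen D.eta D.kk D.a D.psi δ (n + 1) =
      zgen D.eta D.kk D.a D.psi δ n + D.blockSum δ n := by
  rw [zgen, smul_inv_smul₀ (Nat.cast_ne_zero.2 (D.psi_ne n))]
  rfl

theorem psiProd_smul_zgen (δ : Ordinal) (n : ℕ) :
    (D.psiProd n : ℚ) • zgen D.eta D.kk D.a D.psi δ n =
      ygen δ 0 + ∑ i ∈ Finset.range n, (D.psiProd i : ℚ) • D.blockSum δ i := by
  induction n with
  | zero => simp [psiProd, zgen]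
  | succ n ih =>
    rw [psiProd, Finset.prod_range_succ, Nat.cast_mul, mul_smul, ← psiProd,
      psi_smul_zgen_succ, smul_add, ih, Finset.sum_range_succ, add_assoc]

section membership

variable {D}

theorem xgen_mem_Ggrp {β : Ordinal} (hβ : β < ω₁) : xgen β ∈ Ggrp S D :=
  AddSubgroup.subset_closure (Or.inl ⟨β, hβ, rfl⟩)

theorem zgen_mem_Ggrp {δ : Ordinal} (hδ : δ ∈ S) (n : ℕ) :
    zgen D.eta D.kk D.a D.psi δ n ∈ Ggrp S D :=
  AddSubgroup.subset_closure (Or.inr ⟨δ, hδ, n, rfl⟩)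

theorem blockSum_mem_Ggrp (hS : GoodS S) {δ : Ordinal} (hδ : δ ∈ S) (i : ℕ) :
    D.blockSum δ i ∈ Ggrp S D :=
  sum_mem fun _ _ => zsmul_mem
    (xgen_mem_Ggrp (((D.ladder δ hδ).lt_delta _).trans (hS.lt_omega1 δ hδ))) _

theorem xgen_mem_Vsp {ν β : Ordinal} (hβ : β < ν + ω) : xgen β ∈ Vsp S ν :=
  Submodule.subset_span (Or.inl ⟨β, hβ, rfl⟩)

theorem ygen_mem_Vsp {ν δ : Ordinal} (hδ : δ ∈ S) (hδν : δ < ν) (n : ℕ) : ygen δ n ∈ Vsp S ν :=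
  Submodule.subset_span (Or.inr ⟨δ, hδ, hδν, n, rfl⟩)

theorem blockSum_mem_Vsp {ν δ : Ordinal} {i : ℕ}
    (h : ∀ l < D.kk δ (i + 1) - D.kk δ i, D.eta δ (D.kk δ i + l) < ν + ω) :
    D.blockSum δ i ∈ Vsp S ν :=
  sum_mem fun l hl => zsmul_mem (xgen_mem_Vsp (h l (Finset.mem_range.1 hl))) _

theorem zgen_mem_Vsp {ν δ : Ordinal} (hδ : δ ∈ S) (hδν : δ < ν) (n : ℕ) :
    zgen D.eta D.kk D.a D.psi δ n ∈ Vsp S ν := by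
  have hlt : ∀ m, D.eta δ m < ν + ω := fun m =>
    ((D.ladder δ hδ).lt_delta m).trans (hδν.trans_le le_self_add)
  rw [← Submodule.smul_mem_iff _ (D.cast_psiProd_ne_zero n), psiProd_smul_zgen]
  exact add_mem (ygen_mem_Vsp hδ hδν 0)
    (sum_mem fun i _ => Submodule.smul_mem _ _ (blockSum_mem_Vsp fun _ _ => hlt _))

end membership

def cutoff (ν δ : Ordinal) : ℕ := sInf {n | ν + ω ≤ D.eta δ (D.kk δ n)}

section cutoff

variable {D} {ν δ : Ordinal}

theorem exists_add_omega0_le_eta (hS : GoodS S) (hδ : δ ∈ S) (hνδ : ν < δ) :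
    ∃ n, ν + ω ≤ D.eta δ (D.kk δ n) := by
  obtain ⟨m, hm⟩ :=
    (D.ladder δ hδ).cofinal _ (Ordinal.add_omega0_lt_of_omega0_sq_dvd (hS.omega_sq_dvd δ hδ) hνδ)
  exact ⟨m, hm.le.trans ((D.ladder δ hδ).strictMono.monotone (D.kk_mono δ hδ).le_apply)⟩

theorem eta_lt_add_omega0_iff (hS : GoodS S) (hδ : δ ∈ S) (hνδ : ν < δ) {i l : ℕ}
    (hl : l < D.kk δ (i + 1) - D.kk δ i) :
    D.eta δ (D.kk δ i + l) < ν + ω ↔ i < D.cutoff ν δ := by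
  have hblock : D.eta δ (D.kk δ i + l) + ω = D.eta δ (D.kk δ i) + ω := by
    simpa using (D.special δ hδ i).1 l hl 0 (by omega)
  rw [Ordinal.lt_add_omega0_iff, hblock, ← Ordinal.lt_add_omega0_iff, ← not_le, ← not_le]
  refine not_congr ⟨fun h => Nat.sInf_le h, fun h => ?_⟩
  have hmem : ν + ω ≤ D.eta δ (D.kk δ (D.cutoff ν δ)) :=
    Nat.sInf_mem (exists_add_omega0_le_eta hS hδ hνδ)
  exact hmem.trans ((D.ladder δ hδ).strictMono.monotone ((D.kk_mono δ hδ).monotone h))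

end cutoff

variable (ν : Ordinal)

/-- The image of `y_δ` for `δ ∈ S` above `ν`: with `N` the cutoff,
`y_δ = ψ(0)⋯ψ(N-1) z_{δ,N} - Σ_{i<N} ψ(0)⋯ψ(i-1) w_{δ,i}`, and the projection kills `z_{δ,N}`
while fixing each `w_{δ,i}`, `i < N`. -/
def lowPart (δ : Ordinal) : Fsp :=
  -∑ i ∈ Finset.range (D.cutoff ν δ), (D.psiProd i : ℚ) • D.blockSum δ i

open scoped Classical in
def projBasis : FIdx → Fsp
  | Sum.inl β => if β < ν + ω then xgen β else 0
  | Sum.inr (δ, n) =>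
      if δ ∈ S ∧ δ < ν then ygen δ n
      else if δ ∈ S ∧ ν < δ ∧ n = 0 then D.lowPart ν δ else 0

def proj : Fsp →ₗ[ℚ] Fsp :=
  Finsupp.lsum ℚ fun i => LinearMap.toSpanSingleton ℚ Fsp (D.projBasis ν i)

theorem proj_single (i : FIdx) (c : ℚ) :
    D.proj ν (Finsupp.single i c) = c • D.projBasis ν i := by
  rw [proj, Finsupp.lsum_single, LinearMap.toSpanSingleton_apply]

variable {D ν}

theorem proj_xgen_of_le {β : Ordinal} (h : ν + ω ≤ β) : D.proj ν (xgen β) = 0 := by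
  rw [xgen, proj_single, one_smul, projBasis, if_neg h.not_gt]

theorem proj_ygen_zero_of_lt {δ : Ordinal} (hδ : δ ∈ S) (hνδ : ν < δ) :
    D.proj ν (ygen δ 0) = D.lowPart ν δ := by
  rw [ygen, proj_single, one_smul, projBasis, if_neg fun h => h.2.not_gt hνδ,
    if_pos ⟨hδ, hνδ, rfl⟩]

theorem proj_eq_self_of_mem_Vsp {g : Fsp} (hg : g ∈ Vsp S ν) : D.proj ν g = g := by
  suffices Vsp S ν ≤ LinearMap.eqLocus (D.proj ν) LinearMap.id from this hg
  refine Submodule.span_le.2 ?_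
  rintro f (⟨β, hβ, rfl⟩ | ⟨δ, hδ, hδν, n, rfl⟩) <;>
    simp only [SetLike.mem_coe, LinearMap.mem_eqLocus, LinearMap.id_coe, id_eq]
  · rw [xgen, proj_single, one_smul, projBasis, if_pos hβ]
    rfl
  · rw [ygen, proj_single, one_smul, projBasis, if_pos ⟨hδ, hδν⟩]
    rfl

theorem lowPart_mem_Vsp (hS : GoodS S) {δ : Ordinal} (hδ : δ ∈ S) (hνδ : ν < δ) :
    D.lowPart ν δ ∈ Vsp S ν :=
  neg_mem <| sum_mem fun _ hi => Submodule.smul_mem _ _ <| blockSum_mem_Vsp fun _ hl =>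
    (eta_lt_add_omega0_iff hS hδ hνδ hl).2 (Finset.mem_range.1 hi)

theorem proj_mem_Vsp (hS : GoodS S) (f : Fsp) : D.proj ν f ∈ Vsp S ν := by
  induction f using Finsupp.induction_linear with
  | zero => simp
  | add f g hf hg => simpa using add_mem hf hg
  | single i c =>
    rw [proj_single]
    refine Submodule.smul_mem _ _ ?_
    rcases i with β | ⟨δ, n⟩ <;> simp only [projBasis]
    · split_ifs with h
      exacts [xgen_mem_Vsp h, zero_mem _]
    · split_ifs with h h'
      exacts [ygen_mem_Vsp h.1 h.2 n, lowPart_mem_Vsp hS h'.1 h'.2.1, zero_mem _]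

theorem proj_blockSum_of_lt_cutoff (hS : GoodS S) {δ : Ordinal} (hδ : δ ∈ S) (hνδ : ν < δ)
    {i : ℕ} (hi : i < D.cutoff ν δ) : D.proj ν (D.blockSum δ i) = D.blockSum δ i :=
  proj_eq_self_of_mem_Vsp <| blockSum_mem_Vsp fun _ hl =>
    (eta_lt_add_omega0_iff hS hδ hνδ hl).2 hi

theorem proj_blockSum_of_cutoff_le (hS : GoodS S) {δ : Ordinal} (hδ : δ ∈ S) (hνδ : ν < δ)
    {i : ℕ} (hi : D.cutoff ν δ ≤ i) : D.proj ν (D.blockSum δ i) = 0 := by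
  rw [blockSum, map_sum]
  refine Finset.sum_eq_zero fun l hl => ?_
  rw [map_zsmul, proj_xgen_of_le, smul_zero]
  exact not_lt.1 fun h =>
    hi.not_gt ((eta_lt_add_omega0_iff hS hδ hνδ (Finset.mem_range.1 hl)).1 h)

theorem proj_zgen_cutoff (hS : GoodS S) {δ : Ordinal} (hδ : δ ∈ S) (hνδ : ν < δ) :
    D.proj ν (zgen D.eta D.kk D.a D.psi δ (D.cutoff ν δ)) = 0 := by
  refine smul_right_injective Fsp (D.cast_psiProd_ne_zero (D.cutoff ν δ)) ?_
  simp only [smul_zero]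
  rw [← map_smul, psiProd_smul_zgen, map_add, map_sum, proj_ygen_zero_of_lt hδ hνδ, lowPart,
    neg_add_eq_zero]
  refine Finset.sum_congr rfl fun i hi => ?_
  rw [map_smul, proj_blockSum_of_lt_cutoff hS hδ hνδ (Finset.mem_range.1 hi)]

theorem proj_zgen_of_cutoff_le (hS : GoodS S) {δ : Ordinal} (hδ : δ ∈ S) (hνδ : ν < δ) {n : ℕ}
    (hn : D.cutoff ν δ ≤ n) : D.proj ν (zgen D.eta D.kk D.a D.psi δ n) = 0 := by
  induction n, hn using Nat.le_induction with
  | base => exact proj_zgen_cutoff hS hδ hνδ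
  | succ n hn ih =>
    rw [zgen, map_smul, map_add, ih, ← blockSum, proj_blockSum_of_cutoff_le hS hδ hνδ hn, add_zero,
      smul_zero]

/-- Downward induction from the cutoff `N`, where `P z_{δ,N} = 0`, along
`P z_{δ,n} = ψ(n) P z_{δ,n+1} - w_{δ,n}`: this is where integrality comes from. -/
theorem proj_zgen_mem_Ggrp (hS : GoodS S) {δ : Ordinal} (hδ : δ ∈ S) (hνδ : ν < δ) (n : ℕ) :
    D.proj ν (zgen D.eta D.kk D.a D.psi δ n) ∈ Ggrp S D := by
  rcases le_total (D.cutoff ν δ) n with hn | hn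
  · rw [proj_zgen_of_cutoff_le hS hδ hνδ hn]
    exact zero_mem _
  induction hn using Nat.decreasingInduction with
  | self => rw [proj_zgen_cutoff hS hδ hνδ]; exact zero_mem _
  | of_succ k hk ih =>
    have hstep : zgen D.eta D.kk D.a D.psi δ k =
        (D.psi k : ℚ) • zgen D.eta D.kk D.a D.psi δ (k + 1) - D.blockSum δ k := by
      rw [psi_smul_zgen_succ, add_sub_cancel_right]
    rw [hstep, map_sub, map_smul, proj_blockSum_of_lt_cutoff hS hδ hνδ hk, Nat.cast_smul_eq_nsmul]
    exact sub_mem (nsmul_mem ih _) (blockSum_mem_Ggrp hS hδ k)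

theorem proj_mem_Ggrp (hS : GoodS S) (hν : ν ∉ S) {g : Fsp} (hg : g ∈ Ggrp S D) :
    D.proj ν g ∈ Ggrp S D := by
  induction hg using AddSubgroup.closure_induction with
  | mem f hf =>
    rcases hf with ⟨β, hβ, rfl⟩ | ⟨δ, hδ, n, rfl⟩
    · rcases lt_or_ge β (ν + ω) with h | h
      · rw [proj_eq_self_of_mem_Vsp (xgen_mem_Vsp h)]
        exact xgen_mem_Ggrp hβ
      · rw [proj_xgen_of_le h]
        exact zero_mem _
    · rcases lt_trichotomy δ ν with h | rfl | h
      · rw [proj_eq_self_of_mem_Vsp (zgen_mem_Vsp hδ h n)]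
        exact zgen_mem_Ggrp hδ n
      · exact absurd hδ hν
      · exact proj_zgen_mem_Ggrp hS hδ h n
  | zero => simp
  | add x y _ _ hx hy => simpa using add_mem hx hy
  | neg x _ hx => simpa using neg_mem hx

theorem proj_mem_Gfil (hS : GoodS S) (hν : ν ∉ S) {g : Fsp} (hg : g ∈ Ggrp S D) :
    D.proj ν g ∈ Gfil S D ν :=
  mem_Gfil_iff.2 ⟨proj_mem_Ggrp hS hν hg, proj_mem_Vsp hS g⟩

end GroupData

theorem statement6_general (S : Set Ordinal) (hS : GoodS S) (D : GroupData S)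
    (ν : Ordinal) (hν2 : ν ∉ S) :
    (∃ π : ↥(Ggrp S D) →+ ↥(Ggrp S D),
      (∀ g : ↥(Ggrp S D), (π g : Fsp) ∈ Gfil S D ν) ∧
      (∀ g : ↥(Ggrp S D), (g : Fsp) ∈ Gfil S D ν → π g = g)) ∧
    IsDirectSummandIn (Gfil S D ν) (Ggrp S D) := by
  have hmaps : ∀ g ∈ Ggrp S D, D.proj ν g ∈ Gfil S D ν := fun _ hg =>
    GroupData.proj_mem_Gfil hS hν2 hg
  have hfix : ∀ g ∈ Gfil S D ν, D.proj ν g = g := fun _ hg =>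
    GroupData.proj_eq_self_of_mem_Vsp (mem_Gfil_iff.1 hg).2
  have hle : Gfil S D ν ≤ Ggrp S D := fun _ hg => (mem_Gfil_iff.1 hg).1
  let π : ↥(Ggrp S D) →+ ↥(Ggrp S D) :=
    ((D.proj ν).toAddMonoidHom.comp (Ggrp S D).subtype).codRestrict _ fun g => hle (hmaps g g.2)
  exact ⟨⟨π, fun g => hmaps g g.2, fun g hg => Subtype.ext (hfix g hg)⟩,
    isDirectSummandIn_of_retraction (D.proj ν).toAddMonoidHom hle hmaps hfix⟩

theorem statement6 (S : Set Ordinal) (hS : GoodS S) (D : GroupData S)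
    (ν : Ordinal) (hν1 : ν < ω₁) (hν2 : ν ∉ S) :
    (∃ π : ↥(Ggrp S D) →+ ↥(Ggrp S D),
      (∀ g : ↥(Ggrp S D), (π g : Fsp) ∈ Gfil S D ν) ∧
      (∀ g : ↥(Ggrp S D), (g : Fsp) ∈ Gfil S D ν → π g = g)) ∧
    IsDirectSummandIn (Gfil S D ν) (Ggrp S D) :=
  statement6_general S hS D ν hν2
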